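/- A connected weighted graph on n vertices is uniquely determined by its set of all pairwise effective resistances: if two connected weighted graphs on the same vertex set have res_G(u,v) = res_H(u,v) for all pairs u,v, then G = H (same edges with same weights). -/
import Mathlib


open Matrix

/-- `B` is the Moore–Penrose pseudoinverse of `A`. -/
def IsMoorePenrose {V : Type*} [Fintype V] [DecidableEq V] (A B : Matrix V V ℝ) : Prop :=
  A * B * A = A ∧ B * A * B = B ∧ (A * B)ᵀ = A * B ∧ (B * A)ᵀ = B * A

/-- Effective resistance between `u` and `v`, given a matrix `M` playing the role of the
pseudoinverse of the Laplacian: `(1_u - 1_v)ᵀ M (1_u - 1_v)`. -/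
noncomputable def effRes {V : Type*} [Fintype V] [DecidableEq V]
    (M : Matrix V V ℝ) (u v : V) : ℝ :=
  (Pi.single u 1 - Pi.single v 1) ⬝ᵥ (M *ᵥ (Pi.single u 1 - Pi.single v 1))

/-- A symmetric, nonnegative edge-weight function with zero diagonal,
encoding a weighted graph (weight `0` means no edge). -/
structure IsWeight {V : Type*} (w : V → V → ℝ) : Prop where
  symm : ∀ u v, w u v = w v u
  nonneg : ∀ u v, 0 ≤ w u v
  loopless : ∀ v, w v v = 0

/-- The support graph of a weight function: `u ~ v` iff `u ≠ v` and `w u v ≠ 0`. -/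
def supportGraph {V : Type*} (w : V → V → ℝ) : SimpleGraph V :=
  SimpleGraph.fromRel fun u v => w u v ≠ 0

/-- The weighted graph Laplacian `L = D - A`. -/
noncomputable def wLap {V : Type*} [Fintype V] [DecidableEq V] (w : V → V → ℝ) :
    Matrix V V ℝ :=
  Matrix.diagonal (fun v => ∑ u, w v u) - Matrix.of w

section Aux

variable {V : Type*} [Fintype V] [DecidableEq V]

lemma mp_symm {A B : Matrix V V ℝ} (h : IsMoorePenrose A B) : IsMoorePenrose B A :=
  ⟨h.2.1, h.1, h.2.2.2, h.2.2.1⟩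

/-- Uniqueness of the Moore–Penrose pseudoinverse. -/
lemma mp_unique {A B C : Matrix V V ℝ} (hB : IsMoorePenrose A B)
    (hC : IsMoorePenrose A C) : B = C := by
  obtain ⟨hB1, hB2, hB3, hB4⟩ := hB
  obtain ⟨hC1, hC2, hC3, hC4⟩ := hC
  have hB3' : Bᵀ * Aᵀ = A * B := by rw [← Matrix.transpose_mul]; exact hB3
  have hC3' : Cᵀ * Aᵀ = A * C := by rw [← Matrix.transpose_mul]; exact hC3
  have hB4' : Aᵀ * Bᵀ = B * A := by rw [← Matrix.transpose_mul]; exact hB4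
  have hC4' : Aᵀ * Cᵀ = C * A := by rw [← Matrix.transpose_mul]; exact hC4
  have hAB : Aᵀ * Bᵀ * Aᵀ = Aᵀ := by
    rw [← Matrix.transpose_mul, ← Matrix.transpose_mul, ← Matrix.mul_assoc, hB1]
  have hAC : Aᵀ * Cᵀ * Aᵀ = Aᵀ := by
    rw [← Matrix.transpose_mul, ← Matrix.transpose_mul, ← Matrix.mul_assoc, hC1]
  have e1 : B = B * A * C := by
    calc B = B * A * B := hB2.symm
    _ = B * (Bᵀ * Aᵀ) := by rw [hB3', Matrix.mul_assoc]
    _ = B * (Bᵀ * (Aᵀ * Cᵀ * Aᵀ)) := by rw [hAC]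
    _ = B * (Bᵀ * Aᵀ) * (Cᵀ * Aᵀ) := by simp only [Matrix.mul_assoc]
    _ = B * (A * B) * (A * C) := by rw [hB3', hC3']
    _ = (B * A * B) * (A * C) := by simp only [Matrix.mul_assoc]
    _ = B * A * C := by rw [hB2, Matrix.mul_assoc]
  have e2 : C = B * A * C := by
    calc C = C * A * C := hC2.symm
    _ = Aᵀ * Cᵀ * C := by rw [hC4']
    _ = Aᵀ * Bᵀ * Aᵀ * Cᵀ * C := by rw [hAB]
    _ = (Aᵀ * Bᵀ) * (Aᵀ * Cᵀ) * C := by simp only [Matrix.mul_assoc]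
    _ = (B * A) * (C * A) * C := by rw [hB4', hC4']
    _ = B * A * (C * A * C) := by simp only [Matrix.mul_assoc]
    _ = B * A * C := by rw [hC2]
  exact e1.trans e2.symm

/-- The pseudoinverse of a symmetric matrix is symmetric. -/
lemma mp_transpose {A B : Matrix V V ℝ} (hA : Aᵀ = A) (h : IsMoorePenrose A B) :
    Bᵀ = B := by
  obtain ⟨h1, h2, h3, h4⟩ := h
  have h3' : Bᵀ * Aᵀ = A * B := by rw [← Matrix.transpose_mul]; exact h3
  have h4' : Aᵀ * Bᵀ = B * A := by rw [← Matrix.transpose_mul]; exact h4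
  have t1 : A * Bᵀ * A = A := by
    have h1' := congrArg Matrix.transpose h1
    simp only [Matrix.transpose_mul, hA] at h1'
    rw [Matrix.mul_assoc]
    exact h1'
  have t2 : Bᵀ * A * Bᵀ = Bᵀ := by
    have h2' := congrArg Matrix.transpose h2
    simp only [Matrix.transpose_mul, hA] at h2'
    rw [Matrix.mul_assoc]
    exact h2'
  have t3 : (A * Bᵀ)ᵀ = A * Bᵀ := by
    rw [Matrix.transpose_mul, Matrix.transpose_transpose, hA, ← h4', hA]
  have t4 : (Bᵀ * A)ᵀ = Bᵀ * A := by
    rw [Matrix.transpose_mul, Matrix.transpose_transpose, hA, ← h3', hA]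
  exact mp_unique (A := A) ⟨t1, t2, t3, t4⟩ ⟨h1, h2, h3, h4⟩

lemma wLap_symm {w : V → V → ℝ} (hw : IsWeight w) : (wLap w)ᵀ = wLap w := by
  unfold wLap
  rw [Matrix.transpose_sub, Matrix.diagonal_transpose]
  congr 1
  ext u v
  exact hw.symm v u

lemma wLap_mulVec_one {w : V → V → ℝ} : wLap w *ᵥ (fun _ => (1:ℝ)) = 0 := by
  funext v
  simp [wLap, mulVec, dotProduct, Matrix.sub_apply, Matrix.diagonal_apply, Finset.sum_sub_distrib,
    Finset.sum_ite_eq]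

lemma mp_mulVec_one {A B : Matrix V V ℝ} (hA : Aᵀ = A) (hA1 : A *ᵥ (fun _ => (1:ℝ)) = 0)
    (hB2 : B * A * B = B) (hB3 : (A * B)ᵀ = A * B) :
    B *ᵥ (fun _ => (1:ℝ)) = 0 := by
  have hfac : B = B * Bᵀ * Aᵀ := by
    calc B = B * (A * B) := by rw [← Matrix.mul_assoc]; exact hB2.symm
    _ = B * (A * B)ᵀ := by rw [hB3]
    _ = B * (Bᵀ * Aᵀ) := by rw [Matrix.transpose_mul]
    _ = B * Bᵀ * Aᵀ := by rw [Matrix.mul_assoc]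
  rw [hfac, ← Matrix.mulVec_mulVec, hA, hA1, Matrix.mulVec_zero]

lemma effRes_eq {M : Matrix V V ℝ} (u v : V) :
    effRes M u v = M u u + M v v - M u v - M v u := by
  unfold effRes
  simp [mulVec_sub, dotProduct_sub, sub_dotProduct, Matrix.mulVec_single,
    single_dotProduct]
  ring

end Aux

/-- A connected weighted graph is uniquely determined by its pairwise effective
resistances. -/
theorem eq_of_effRes_eq {V : Type*} [Fintype V] [DecidableEq V]
    (wG wH : V → V → ℝ) (hwG : IsWeight wG) (hwH : IsWeight wH)
    (hGconn : (supportGraph wG).Connected) (hHconn : (supportGraph wH).Connected)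
    (LpG LpH : Matrix V V ℝ)
    (hLpG : IsMoorePenrose (wLap wG) LpG) (hLpH : IsMoorePenrose (wLap wH) LpH)
    (hres : ∀ u v, effRes LpG u v = effRes LpH u v) :
    wG = wH := by
  have hV : Nonempty V := hGconn.nonempty
  set B := LpG
  set C := LpH
  have hGsym := wLap_symm hwG
  have hHsym := wLap_symm hwH
  have hBsym : Bᵀ = B := mp_transpose hGsym hLpG
  have hCsym : Cᵀ = C := mp_transpose hHsym hLpH
  have hB1 : B *ᵥ (fun _ => (1:ℝ)) = 0 :=
    mp_mulVec_one hGsym wLap_mulVec_one hLpG.2.1 hLpG.2.2.1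
  have hC1 : C *ᵥ (fun _ => (1:ℝ)) = 0 :=
    mp_mulVec_one hHsym wLap_mulVec_one hLpH.2.1 hLpH.2.2.1
  -- row sums vanish
  have hBrow : ∀ u, ∑ v, B u v = 0 := by
    intro u
    have := congrFun hB1 u
    simpa [Matrix.mulVec, dotProduct] using this
  have hCrow : ∀ u, ∑ v, C u v = 0 := by
    intro u
    have := congrFun hC1 u
    simpa [Matrix.mulVec, dotProduct] using this
  -- the resistance identity, using symmetry
  have key : ∀ u v, B u u + B v v - 2 * B u v = C u u + C v v - 2 * C u v := by
    intro u v
    have h := hres u v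
    rw [effRes_eq, effRes_eq] at h
    have hB' : B v u = B u v := by
      have := congrFun (congrFun hBsym v) u
      simpa using this.symm
    have hC' : C v u = C u v := by
      have := congrFun (congrFun hCsym v) u
      simpa using this.symm
    rw [hB', hC'] at h
    linarith
  -- recover diagonal and then all entries
  set n : ℝ := (Fintype.card V : ℝ)
  have hn : n ≠ 0 := by
    simp only [n, Nat.cast_ne_zero]
    exact Fintype.card_ne_zero
  set trB : ℝ := ∑ v, B v v
  set trC : ℝ := ∑ v, C v v
  have hsum : ∀ u, n * B u u + trB = n * C u u + trC := by
    intro u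
    have h1 : ∑ v, (B u u + B v v - 2 * B u v) = ∑ v, (C u u + C v v - 2 * C u v) :=
      Finset.sum_congr rfl fun v _ => key u v
    have e : ∀ (M : Matrix V V ℝ), (∀ u, ∑ v, M u v = 0) →
        ∑ v, (M u u + M v v - 2 * M u v) = n * M u u + ∑ v, M v v := by
      intro M hM
      rw [Finset.sum_sub_distrib, Finset.sum_add_distrib, Finset.sum_const,
        ← Finset.mul_sum, hM u, nsmul_eq_mul]
      simp only [Finset.card_univ, n]
      ring
    rw [e B hBrow, e C hCrow] at h1
    exact h1
  have htr : trB = trC := by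
    have h2 : ∑ u, (n * B u u + trB) = ∑ u, (n * C u u + trC) :=
      Finset.sum_congr rfl fun u _ => hsum u
    rw [Finset.sum_add_distrib, Finset.sum_add_distrib, ← Finset.mul_sum, ← Finset.mul_sum,
      Finset.sum_const, Finset.sum_const] at h2
    simp only [nsmul_eq_mul] at h2
    have : n * trB + n * trB = n * trC + n * trC := by
      simpa [trB, trC, n] using h2
    have := mul_left_cancel₀ (b := trB + trB) (c := trC + trC) hn (by ring_nf; linarith)
    linarith
  have hdiag : ∀ u, B u u = C u u := by
    intro u
    have := hsum u
    rw [htr] at this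
    have h3 : n * B u u = n * C u u := by linarith
    exact mul_left_cancel₀ hn h3
  have hBC : B = C := by
    ext u v
    have := key u v
    rw [hdiag u, hdiag v] at this
    linarith
  -- now both Laplacians are Moore-Penrose inverses of the same matrix
  have hLap : wLap wG = wLap wH := by
    refine mp_unique (A := B) (mp_symm hLpG) ?_
    rw [hBC]
    exact mp_symm hLpH
  -- extract weights
  funext u v
  by_cases huv : u = v
  · rw [huv, hwG.loopless, hwH.loopless]
  · have := congrFun (congrFun hLap u) v
    simp only [wLap, Matrix.sub_apply, Matrix.diagonal_apply_ne _ huv, Matrix.of_apply] at this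
    linarith
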